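/- arXiv:1609.06098 — 4 statements merged into one kernel-verified Lean document; each statement's English description precedes it below -/
import Mathlib

section
/- For any negative integer α and any integers k, m ≥ −α, ∫₀^∞ L_k^α(x)·L_m^α(x)·x^α·e^{−x} dx = (Γ(k+α+1)/k!)·δ_{k,m}. -/
open Finset

/-- Generalized Laguerre polynomial `L_k^α(x)`, extended by `0` for negative index `k`. -/
noncomputable def genLaguerre (α : ℝ) (k : ℤ) (x : ℝ) : ℝ :=
  if k < 0 then 0 else
    ∑ ν ∈ Finset.range (k.toNat + 1),
      (ascPochhammer ℝ (k.toNat - ν)).eval (α + ν + 1) /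
        ((k.toNat - ν).factorial * ν.factorial) * (-x) ^ ν

/-!
Write `α = -b`, `k = n + b`, `m = p + b`. The Pochhammer factor kills the first `b` terms of
`L_{n+b}^{-b}`, leaving `(-x)^b ∑ᵢ (-1)^i C(n,i) x^i / (i+b)!`; so `(-x)^{2b}` absorbs the weight
`x^{-b}` and, integrating monomials against `e^{-x}`, the integral becomes
`∑ᵢ ∑ⱼ (-1)^{i+j} C(n,i) C(p,j) (i+j+b)! / ((i+b)! (j+b)!)`.
For fixed `i`, the sum over `j` is, up to sign and `i!`, the `p`-th forward difference of
`y ↦ C(y, i)` at `y = i + b`, which vanishes for `i < p`. By symmetry only `i = j = n = p`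
contributes, giving `n! / (n+b)! = Γ(k+α+1) / k!`.
-/

open Function MeasureTheory
open scoped Nat

lemma genLaguerre_neg_natCast_add (b n : ℕ) (x : ℝ) :
    genLaguerre (-b) (n + b) x
      = (-x) ^ b * ∑ i ∈ range (n + 1), (-1) ^ i * n.choose i / (i + b)! * x ^ i := by
  rw [genLaguerre, if_neg (by omega), show (n + b : ℤ).toNat = n + b by omega,
    show n + b + 1 = b + (n + 1) by ring, sum_range_add, mul_sum]
  have hvanish : ∀ ν ∈ range b, (ascPochhammer ℝ (n + b - ν)).eval (-(b : ℝ) + ν + 1) = 0 := by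
    intro ν hν
    have hν : ν < b := mem_range.mp hν
    rw [show (-(b : ℝ) + ν + 1) = -((b - (ν + 1) : ℕ) : ℝ) by
      rw [Nat.cast_sub (by omega)]; push_cast; ring]
    exact ascPochhammer_eval_neg_coe_nat_of_lt (by omega)
  rw [sum_eq_zero fun ν hν ↦ by rw [hvanish ν hν, zero_div, zero_mul], zero_add]
  refine sum_congr rfl fun i hi ↦ ?_
  have hi : i ≤ n := Nat.lt_succ_iff.mp (mem_range.mp hi)
  have hpoch : (ascPochhammer ℝ (n - i)).eval ((i : ℝ) + 1) = n ! / i ! := by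
    rw [eq_div_iff (by positivity), mul_comm, factorial_mul_ascPochhammer, Nat.add_sub_cancel' hi]
  rw [show n + b - (b + i) = n - i by omega,
    show (-b + (b + i : ℕ) + 1 : ℝ) = i + 1 by push_cast; ring, hpoch, Nat.cast_choose ℝ hi,
    pow_add, neg_pow x i, add_comm b i]
  field_simp

lemma integrableOn_pow_mul_exp_neg (n : ℕ) :
    IntegrableOn (fun x : ℝ ↦ x ^ n * Real.exp (-x)) (Set.Ioi 0) := by
  refine (Real.GammaIntegral_convergent (s := n + 1) (by positivity)).congr_fun (fun x _ ↦ ?_)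
    measurableSet_Ioi
  simp [mul_comm]

lemma integral_pow_mul_exp_neg (n : ℕ) :
    ∫ x in Set.Ioi (0 : ℝ), x ^ n * Real.exp (-x) = n ! := by
  rw [← Real.Gamma_nat_eq_factorial, Real.Gamma_eq_integral (by positivity)]
  refine setIntegral_congr_fun measurableSet_Ioi fun x _ ↦ ?_
  simp [mul_comm]

lemma integral_sum_mul_sum_mul_pow_mul_exp_neg (a c : ℕ → ℝ) (N M b : ℕ) :
    ∫ x in Set.Ioi (0 : ℝ),
        (∑ i ∈ range N, a i * x ^ i) * (∑ j ∈ range M, c j * x ^ j) * x ^ b * Real.exp (-x)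
      = ∑ i ∈ range N, ∑ j ∈ range M, a i * c j * (i + j + b)! := by
  have hexpand : ∀ x : ℝ,
      (∑ i ∈ range N, a i * x ^ i) * (∑ j ∈ range M, c j * x ^ j) * x ^ b * Real.exp (-x)
        = ∑ i ∈ range N, ∑ j ∈ range M, a i * c j * (x ^ (i + j + b) * Real.exp (-x)) := fun x ↦ by
    rw [sum_mul_sum, sum_mul, sum_mul]
    exact sum_congr rfl fun i _ ↦ by rw [sum_mul, sum_mul]; exact sum_congr rfl fun j _ ↦ by ring
  simp_rw [hexpand]
  have hint : ∀ i j, Integrable (fun x ↦ a i * c j * (x ^ (i + j + b) * Real.exp (-x)))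
      (volume.restrict (Set.Ioi 0)) := fun i j ↦ (integrableOn_pow_mul_exp_neg _).const_mul _
  rw [integral_finsetSum _ fun i _ ↦ integrable_finsetSum _ fun j _ ↦ hint i j]
  refine sum_congr rfl fun i _ ↦ ?_
  rw [integral_finsetSum _ fun j _ ↦ hint i j]
  refine sum_congr rfl fun j _ ↦ ?_
  rw [integral_const_mul, integral_pow_mul_exp_neg]

lemma fwdDiff_iter_choose_eq_ite (p i : ℕ) :
    (fwdDiff 1)^[p] (fun x ↦ x.choose i : ℕ → ℤ)
      = if p ≤ i then fun x ↦ (x.choose (i - p) : ℤ) else fun _ ↦ 0 := by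
  split_ifs with h
  · obtain ⟨r, rfl⟩ := Nat.exists_eq_add_of_le h
    simpa using fwdDiff_iter_choose r p
  · obtain ⟨q, rfl⟩ := Nat.exists_eq_add_of_lt (not_le.mp h)
    have hconst : (fwdDiff 1)^[i] (fun x ↦ x.choose i : ℕ → ℤ) = fun _ ↦ 1 := by
      simpa using fwdDiff_iter_choose 0 i
    rw [show i + q + 1 = q + 1 + i by ring, iterate_add_apply, hconst, iterate_succ_apply,
      fwdDiff_const]
    exact iterate_fixed (fwdDiff_const 1 0) q

lemma sum_range_neg_one_pow_mul_choose_mul_add_choose (p c i : ℕ) :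
    ∑ j ∈ range (p + 1), (-1 : ℤ) ^ j * p.choose j * (c + j).choose i
      = if p ≤ i then (-1 : ℤ) ^ p * c.choose (i - p) else 0 := by
  have hΔ := congr_fun (fwdDiff_iter_choose_eq_ite p i) c
  simp only [fwdDiff_iter_eq_sum_shift, smul_eq_mul, mul_one] at hΔ
  have hsign : ∀ j ∈ range (p + 1), (-1 : ℤ) ^ j = (-1) ^ p * (-1) ^ (p - j) := fun j hj ↦ by
    have hjp := mem_range.mp hj
    rw [← pow_add, show p + (p - j) = j + 2 * (p - j) by omega, pow_add, pow_mul, neg_one_sq,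
      one_pow, mul_one]
  calc ∑ j ∈ range (p + 1), (-1 : ℤ) ^ j * p.choose j * (c + j).choose i
      = (-1 : ℤ) ^ p * ∑ j ∈ range (p + 1), (-1 : ℤ) ^ (p - j) * p.choose j * (c + j).choose i := by
        rw [mul_sum]
        exact sum_congr rfl fun j hj ↦ by rw [hsign j hj]; ring
    _ = _ := by rw [hΔ]; split_ifs <;> simp

lemma sum_range_neg_one_pow_mul_choose_div_factorial_mul_factorial (b i p : ℕ) :
    ∑ j ∈ range (p + 1), (-1 : ℝ) ^ j * p.choose j / (j + b)! * (i + j + b)!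
      = if p ≤ i then (-1 : ℝ) ^ p * i ! * (i + b).choose (i - p) else 0 := by
  have hterm : ∀ j, (-1 : ℝ) ^ j * p.choose j / (j + b)! * (i + j + b)!
      = i ! * ((-1) ^ j * p.choose j * (i + b + j).choose i) := fun j ↦ by
    have h := Nat.add_choose_mul_factorial_mul_factorial (j + b) i
    rw [show j + b + i = i + b + j by ring] at h
    rw [show i + j + b = i + b + j by ring, ← h]
    push_cast
    field_simp
  have hA := sum_range_neg_one_pow_mul_choose_mul_add_choose p (i + b) i
  simp only [hterm, ← mul_sum]
  rw [show ∑ j ∈ range (p + 1), (-1 : ℝ) ^ j * p.choose j * ((i + b + j).choose i : ℕ)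
      = ((∑ j ∈ range (p + 1), (-1 : ℤ) ^ j * p.choose j * (i + b + j).choose i : ℤ) : ℝ) by
    push_cast; rfl, hA]
  split_ifs <;> push_cast <;> ring

lemma sum_range_sum_range_neg_one_pow_mul_choose_div_factorial_mul_factorial (b n p : ℕ) :
    ∑ i ∈ range (n + 1), ∑ j ∈ range (p + 1),
        (-1 : ℝ) ^ i * n.choose i / (i + b)! * ((-1) ^ j * p.choose j / (j + b)!) * (i + j + b)!
      = if n = p then (n ! : ℝ) / (n + b)! else 0 := by
  wlog hnp : n ≤ p generalizing n p
  · rw [sum_comm]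
    convert this p n (by omega) using 1
    · exact sum_congr rfl fun j _ ↦ sum_congr rfl fun i _ ↦ by ring_nf
    · by_cases h : n = p
      · subst h; rfl
      · simp [h, Ne.symm h]
  have hinner : ∀ i, ∑ j ∈ range (p + 1),
      (-1 : ℝ) ^ i * n.choose i / (i + b)! * ((-1) ^ j * p.choose j / (j + b)!) * (i + j + b)!
      = (-1 : ℝ) ^ i * n.choose i / (i + b)! *
          if p ≤ i then (-1 : ℝ) ^ p * i ! * (i + b).choose (i - p) else 0 := fun i ↦ by
    rw [← sum_range_neg_one_pow_mul_choose_div_factorial_mul_factorial, mul_sum]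
    exact sum_congr rfl fun j _ ↦ by ring
  rw [sum_congr rfl fun i _ ↦ hinner i, sum_range_succ,
    sum_eq_zero fun i hi ↦ by rw [if_neg (by simp at hi; omega), mul_zero], zero_add]
  rcases hnp.lt_or_eq with hlt | rfl
  · simp [hlt.ne, not_le.mpr hlt]
  · simp only [le_refl, if_true, Nat.sub_self, Nat.choose_self, Nat.choose_zero_right]
    push_cast
    field_simp
    rw [← pow_mul, mul_comm, pow_mul, neg_one_sq, one_pow]

theorem genLaguerre_orthogonality_neg (α : ℤ) (hα : α < 0) (k m : ℤ) (hk : -α ≤ k) (hm : -α ≤ m) :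
    ∫ x in Set.Ioi (0 : ℝ),
        genLaguerre (α : ℝ) k x * genLaguerre (α : ℝ) m x * x ^ α * Real.exp (-x)
      = (if k = m then Real.Gamma ((k : ℝ) + (α : ℝ) + 1) / (k.toNat.factorial : ℝ) else 0) := by
  obtain ⟨b, rfl⟩ : ∃ b : ℕ, α = -b := ⟨(-α).toNat, by omega⟩
  obtain ⟨n, rfl⟩ : ∃ n : ℕ, k = n + b := ⟨(k - b).toNat, by omega⟩
  obtain ⟨p, rfl⟩ : ∃ p : ℕ, m = p + b := ⟨(m - b).toNat, by omega⟩
  have hintegrand : ∀ x ∈ Set.Ioi (0 : ℝ),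
      genLaguerre ((-b : ℤ) : ℝ) (n + b) x * genLaguerre ((-b : ℤ) : ℝ) (p + b) x * x ^ (-b : ℤ)
          * Real.exp (-x)
        = (∑ i ∈ range (n + 1), (-1) ^ i * n.choose i / (i + b)! * x ^ i)
          * (∑ j ∈ range (p + 1), (-1) ^ j * p.choose j / (j + b)! * x ^ j) * x ^ b
          * Real.exp (-x) := fun x hx ↦ by
    have hsq : (-x) ^ b * (-x) ^ b = x ^ b * x ^ b := by rw [← mul_pow, neg_mul_neg, mul_pow]
    rw [Int.cast_neg, Int.cast_natCast, genLaguerre_neg_natCast_add, genLaguerre_neg_natCast_add,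
      zpow_neg, zpow_natCast]
    have hx0 : x ≠ 0 := ne_of_gt hx
    field_simp
    rw [sq, hsq]
    ring
  rw [setIntegral_congr_fun measurableSet_Ioi hintegrand, integral_sum_mul_sum_mul_pow_mul_exp_neg,
    sum_range_sum_range_neg_one_pow_mul_choose_div_factorial_mul_factorial]
  have hkm : ((n : ℤ) + b = p + b) ↔ n = p := by omega
  rw [show ((n : ℤ) + b).toNat = n + b by omega]
  push_cast
  simp only [add_neg_cancel_right, Real.Gamma_nat_eq_factorial, hkm]
end

section
/- For α > −1 (real) and β > 0, the generalized Laguerre functions are orthogonal in the weighted L² space: ∫₀^∞ l_k^{α,β}(x)·l_m^{α,β}(x)·x^α dx = β^{−α−1}·(Γ(k+α+1)/k!)·δ_{k,m} for all k, m ∈ ℕ. -/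
/-!
Substituting `t = βx` reduces everything to `β = 1`, i.e. to the functional
`p ↦ ∫₀^∞ e^{-t} t^α p(t) dt` on polynomials, which sends `t^n` to `Γ(α + n + 1)`.
Pairing `L_m^α` with `t^ν` gives, since `(α + μ + 1)_{m-μ} Γ(α + μ + 1) = Γ(α + m + 1)`,
`Γ(α + m + 1)/m! · ∑_μ (-1)^μ C(m, μ) (α + μ + 1)_ν`, an `m`-th finite difference of a
polynomial of degree `ν` in `μ`: it vanishes for `ν < m` and is `(-1)^m m!` for `ν = m`.
So `L_m^α` is orthogonal to all polynomials of lower degree, and pairing it with `L_k^α`, `k ≤ m`,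
only sees the coefficient of `t^m` in `L_k^α`, which is `(-1)^m/m!` if `k = m` and `0` otherwise.
-/

open Finset

/-- Generalized Laguerre function `l_k^{α,β}(x) = e^{-βx/2} L_k^α(βx)`. -/
noncomputable def genLaguerreFun (α β : ℝ) (k : ℤ) (x : ℝ) : ℝ :=
  Real.exp (-(β * x) / 2) * genLaguerre α k (β * x)

open Polynomial Nat fwdDiff MeasureTheory Set Real

theorem Polynomial.sum_range_neg_one_pow_mul_choose_mul_eval {R : Type*} [CommRing R]
    (P : R[X]) {m : ℕ} (hP : P.natDegree ≤ m) :
    ∑ k ∈ range (m + 1), (-1) ^ k * (m.choose k : R) * P.eval (k : R) =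
      (-1) ^ m * m ! * P.coeff m := by
  have hdiff : (fwdDiff 1)^[m] P.eval 0 = m ! * P.coeff m := by
    rcases hP.lt_or_eq with hlt | rfl
    · simp [P.fwdDiff_iter_eq_zero_of_degree_lt hlt, coeff_eq_zero_of_natDegree_lt hlt]
    · simp [P.fwdDiff_iter_degree_eq_factorial, mul_comm]
  rw [fwdDiff_iter_eq_sum_shift] at hdiff
  rw [mul_assoc, ← hdiff, mul_sum]
  refine sum_congr rfl fun k hk => ?_
  have hsign : (-1 : R) ^ m = (-1) ^ (m - k) * (-1) ^ k := by
    rw [← pow_add, Nat.sub_add_cancel (mem_range_succ_iff.mp hk)]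
  simp only [zero_add, nsmul_one, zsmul_eq_mul, Int.cast_mul, Int.cast_pow, Int.cast_neg,
    Int.cast_one, Int.cast_natCast, hsign]
  have hsq : (-1 : R) ^ (m - k) * (-1) ^ (m - k) = 1 := by
    rw [← mul_pow, neg_one_mul, neg_neg, one_pow]
  linear_combination (-(-1 : R) ^ k * m.choose k * P.eval (k : R)) * hsq

theorem Real.Gamma_add_nat_eq_ascPochhammer_mul {x : ℝ} (n : ℕ) (hx : ∀ k : ℕ, x + k ≠ 0) :
    Gamma (x + n) = (ascPochhammer ℝ n).eval x * Gamma x := by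
  induction n with
  | zero => simp
  | succ n ih =>
    rw [Nat.cast_succ, ← add_assoc, Gamma_add_one (hx n), ih, ascPochhammer_succ_right]
    simp only [eval_mul, eval_add, eval_X, eval_natCast]
    ring

theorem exp_neg_mul_rpow_mul_pow_eqOn (α : ℝ) (n : ℕ) :
    EqOn (fun t => exp (-t) * t ^ α * t ^ n) (fun t => exp (-t) * t ^ (α + n + 1 - 1))
      (Ioi 0) := fun t ht => by
  simp only [add_sub_cancel_right, rpow_add_natCast (ne_of_gt ht), mul_assoc]

theorem integrableOn_exp_neg_mul_rpow_mul_pow {α : ℝ} (hα : -1 < α) (n : ℕ) :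
    IntegrableOn (fun t => exp (-t) * t ^ α * t ^ n) (Ioi 0) :=
  (GammaIntegral_convergent (by linarith [n.cast_nonneg (α := ℝ)])).congr_fun
    (exp_neg_mul_rpow_mul_pow_eqOn α n).symm measurableSet_Ioi

theorem integral_exp_neg_mul_rpow_mul_pow {α : ℝ} (hα : -1 < α) (n : ℕ) :
    ∫ t in Ioi 0, exp (-t) * t ^ α * t ^ n = Gamma (α + n + 1) := by
  rw [setIntegral_congr_fun measurableSet_Ioi (exp_neg_mul_rpow_mul_pow_eqOn α n),
    Gamma_eq_integral (by linarith [n.cast_nonneg (α := ℝ)])]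

noncomputable def gammaMoment (α : ℝ) : ℝ[X] →ₗ[ℝ] ℝ :=
  lsum fun n => Gamma (α + n + 1) • LinearMap.id

theorem gammaMoment_monomial (α : ℝ) (n : ℕ) (a : ℝ) :
    gammaMoment α (monomial n a) = a * Gamma (α + n + 1) := by
  simp [gammaMoment, lsum_apply, sum_monomial_index, mul_comm]

theorem integrableOn_exp_neg_mul_rpow_mul_eval {α : ℝ} (hα : -1 < α) (p : ℝ[X]) :
    IntegrableOn (fun t => exp (-t) * t ^ α * p.eval t) (Ioi 0) := by
  induction p using Polynomial.induction_on' with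
  | add p q hp hq =>
    simp only [eval_add, mul_add]
    exact hp.add hq
  | monomial n a =>
    simp only [eval_monomial, mul_left_comm _ a]
    exact (integrableOn_exp_neg_mul_rpow_mul_pow hα n).const_mul a

theorem integral_exp_neg_mul_rpow_mul_eval {α : ℝ} (hα : -1 < α) (p : ℝ[X]) :
    ∫ t in Ioi 0, exp (-t) * t ^ α * p.eval t = gammaMoment α p := by
  induction p using Polynomial.induction_on' with
  | add p q hp hq =>
    simp only [eval_add, mul_add, map_add]
    rw [integral_add (integrableOn_exp_neg_mul_rpow_mul_eval hα p)
      (integrableOn_exp_neg_mul_rpow_mul_eval hα q), hp, hq]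
  | monomial n a =>
    simp only [eval_monomial, mul_left_comm _ a, gammaMoment_monomial]
    rw [integral_const_mul, integral_exp_neg_mul_rpow_mul_pow hα]

noncomputable def laguerreCoeff (α : ℝ) (k ν : ℕ) : ℝ :=
  (-1) ^ ν * (ascPochhammer ℝ (k - ν)).eval (α + ν + 1) / ((k - ν)! * ν !)

noncomputable def laguerre (α : ℝ) (k : ℕ) : ℝ[X] :=
  ∑ ν ∈ range (k + 1), monomial ν (laguerreCoeff α k ν)

theorem genLaguerre_natCast (α : ℝ) (k : ℕ) (x : ℝ) :
    genLaguerre α k x = (laguerre α k).eval x := by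
  simp only [genLaguerre, laguerre, laguerreCoeff, eval_finsetSum, eval_monomial, neg_pow x]
  simp only [Int.natCast_nonneg, not_lt.mpr, if_false, Int.toNat_natCast]
  refine sum_congr rfl fun _ _ => by ring

theorem natDegree_laguerre_le (α : ℝ) (k : ℕ) : (laguerre α k).natDegree ≤ k :=
  natDegree_sum_le_of_forall_le _ _ fun _ hν =>
    (natDegree_monomial_le _).trans (mem_range_succ_iff.mp hν)

theorem coeff_laguerre_self (α : ℝ) (k : ℕ) : (laguerre α k).coeff k = (-1) ^ k / k ! := by
  simp [laguerre, laguerreCoeff, coeff_monomial]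

theorem laguerreCoeff_mul_Gamma {α : ℝ} (hα : -1 < α) {m μ : ℕ} (hμ : μ ≤ m) :
    laguerreCoeff α m μ * Gamma (α + μ + 1) =
      (-1) ^ μ * m.choose μ * Gamma (α + m + 1) / m ! := by
  have hGamma : Gamma (α + m + 1) =
      (ascPochhammer ℝ (m - μ)).eval (α + μ + 1) * Gamma (α + μ + 1) := by
    have h := Gamma_add_nat_eq_ascPochhammer_mul (m - μ) fun k =>
      (show 0 < α + μ + 1 + k by linarith [μ.cast_nonneg (α := ℝ), k.cast_nonneg (α := ℝ)]).ne'
    rwa [Nat.cast_sub hμ, show α + μ + 1 + (m - μ : ℝ) = α + m + 1 by ring] at h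
  have hchoose : (m.choose μ : ℝ) * (m - μ)! * μ ! = m ! := by
    exact_mod_cast (by rw [mul_right_comm]; exact Nat.choose_mul_factorial_mul_factorial hμ)
  have hchoose_ne : (m.choose μ : ℝ) ≠ 0 := by exact_mod_cast (Nat.choose_pos hμ).ne'
  rw [hGamma, laguerreCoeff, ← hchoose]
  field_simp

theorem gammaMoment_laguerre_mul_X_pow {α : ℝ} (hα : -1 < α) {m ν : ℕ} (hν : ν ≤ m) :
    gammaMoment α (laguerre α m * X ^ ν) =
      if ν = m then (-1) ^ m * Gamma (α + m + 1) else 0 := by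
  set P : ℝ[X] := (ascPochhammer ℝ ν).comp (X + C (α + 1))
  have hP_natDegree : P.natDegree = ν := by
    rw [natDegree_comp, ascPochhammer_natDegree, natDegree_X_add_C, mul_one]
  have hP_coeff : P.coeff m = if ν = m then 1 else 0 := by
    split_ifs with h
    · subst h
      rw [← hP_natDegree]
      exact ((monic_ascPochhammer ℝ ν).comp_X_add_C (α + 1)).coeff_natDegree
    · exact coeff_eq_zero_of_natDegree_lt (by omega)
  have hterm : ∀ μ ∈ range (m + 1), laguerreCoeff α m μ * Gamma (α + ↑(μ + ν) + 1) =
      Gamma (α + m + 1) / m ! * ((-1) ^ μ * m.choose μ * P.eval (μ : ℝ)) := by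
    intro μ hμ
    have hpos : ∀ k : ℕ, α + μ + 1 + k ≠ 0 := fun k =>
      (show 0 < α + μ + 1 + k by linarith [μ.cast_nonneg (α := ℝ), k.cast_nonneg (α := ℝ)]).ne'
    have hGamma := Gamma_add_nat_eq_ascPochhammer_mul ν hpos
    rw [show α + μ + 1 + ν = α + ↑(μ + ν) + 1 by push_cast; ring] at hGamma
    rw [hGamma, mul_left_comm, laguerreCoeff_mul_Gamma hα (mem_range_succ_iff.mp hμ)]
    simp only [P, eval_comp, eval_add, eval_X, eval_C]
    ring_nf
  calc gammaMoment α (laguerre α m * X ^ ν)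
      = ∑ μ ∈ range (m + 1), laguerreCoeff α m μ * Gamma (α + ↑(μ + ν) + 1) := by
        simp only [laguerre, sum_mul, monomial_mul_X_pow, map_sum, gammaMoment_monomial]
    _ = Gamma (α + m + 1) / m ! * ((-1) ^ m * m ! * P.coeff m) := by
        rw [sum_congr rfl hterm, ← mul_sum,
          sum_range_neg_one_pow_mul_choose_mul_eval P (hP_natDegree.trans_le hν)]
    _ = if ν = m then (-1) ^ m * Gamma (α + m + 1) else 0 := by
        rw [hP_coeff]
        split_ifs
        · field_simp
        · simp

theorem gammaMoment_laguerre_mul {α : ℝ} (hα : -1 < α) {m : ℕ} {q : ℝ[X]}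
    (hq : q.natDegree ≤ m) :
    gammaMoment α (laguerre α m * q) = (-1) ^ m * Gamma (α + m + 1) * q.coeff m := by
  conv_lhs => rw [q.as_sum_range_C_mul_X_pow' (Nat.lt_add_one_of_le hq)]
  simp only [mul_sum, C_mul', mul_smul_comm, map_sum, map_smul, smul_eq_mul]
  rw [sum_congr rfl fun ν hν =>
    congrArg _ (gammaMoment_laguerre_mul_X_pow hα (mem_range_succ_iff.mp hν))]
  simp [mul_comm]

theorem gammaMoment_laguerre_mul_laguerre {α : ℝ} (hα : -1 < α) (k m : ℕ) :
    gammaMoment α (laguerre α k * laguerre α m) =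
      if k = m then Gamma (k + α + 1) / k ! else 0 := by
  wlog hkm : k ≤ m generalizing k m
  · rw [mul_comm, this m k (le_of_not_ge hkm), if_neg (by omega), if_neg (by omega)]
  rw [mul_comm, gammaMoment_laguerre_mul hα (natDegree_laguerre_le α k |>.trans hkm)]
  split_ifs with h
  · subst h
    rw [coeff_laguerre_self, add_comm (k : ℝ) α, mul_right_comm, ← mul_div_assoc, ← mul_pow,
      neg_one_mul, neg_neg, one_pow, one_div_mul_eq_div]
  · rw [coeff_eq_zero_of_natDegree_lt ((natDegree_laguerre_le α k).trans_lt (by omega)), mul_zero]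

theorem genLaguerreFun_mul_genLaguerreFun_mul_rpow_eqOn (α : ℝ) {β : ℝ} (hβ : 0 < β)
    (k m : ℕ) :
    EqOn (fun x => genLaguerreFun α β k x * genLaguerreFun α β m x * x ^ α)
      (fun x => β ^ (-α) *
        (exp (-(β * x)) * (β * x) ^ α * (laguerre α k * laguerre α m).eval (β * x)))
      (Ioi 0) := fun x hx => by
  have hexp : exp (-(β * x)) = exp (-(β * x) / 2) * exp (-(β * x) / 2) := by
    rw [← exp_add, add_halves]
  have hβα : β ^ (-α) * β ^ α = 1 := by rw [← rpow_add hβ, neg_add_cancel, rpow_zero]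
  simp only [genLaguerreFun, genLaguerre_natCast, eval_mul, hexp,
    mul_rpow hβ.le (le_of_lt hx)]
  linear_combination (-(exp (-(β * x) / 2) * exp (-(β * x) / 2) * (laguerre α k).eval (β * x) *
    (laguerre α m).eval (β * x) * x ^ α)) * hβα

theorem genLaguerreFun_orthogonality (α β : ℝ) (hα : -1 < α) (hβ : 0 < β) (k m : ℕ) :
    ∫ x in Set.Ioi (0 : ℝ),
        genLaguerreFun α β k x * genLaguerreFun α β m x * x ^ α
      = β ^ (-α - 1) *
          (if k = m then Real.Gamma ((k : ℝ) + α + 1) / (k.factorial : ℝ) else 0) := by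
  rw [setIntegral_congr_fun measurableSet_Ioi
      (genLaguerreFun_mul_genLaguerreFun_mul_rpow_eqOn α hβ k m), integral_const_mul,
    integral_comp_mul_left_Ioi (fun t => exp (-t) * t ^ α * (laguerre α k * laguerre α m).eval t)
      0 hβ, mul_zero, integral_exp_neg_mul_rpow_mul_eval hα, gammaMoment_laguerre_mul_laguerre hα,
    smul_eq_mul, ← mul_assoc, ← rpow_neg_one, ← rpow_add hβ, ← sub_eq_add_neg]
end

section
/- Define λ_{k,n}^α by λ_{k,0}^α = 1 and λ_{k,n}^α = (k+α+1)·λ_{k,n−1}^{α+1} + k·λ_{k−1,n−1}^{α+1} for n ≥ 1, k ≥ 0 (with λ_{−1,n}^α = 0). Then for all k, n ∈ ℕ₀, λ_{k,n}^{−n} = 2ⁿ·(k−n+1)_n, where (a)_n is the Pochhammer symbol. -/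
/-- The eigenvalues `λ_{k,n}^α`, defined by `λ_{k,0}^α = 1`,
`λ_{k,n}^α = (k+α+1) λ_{k,n-1}^{α+1} + k λ_{k-1,n-1}^{α+1}`, with `λ_{k,n}^α = 0` for `k < 0`. -/
noncomputable def lagEigen : ℝ → ℤ → ℕ → ℝ
  | _, k, 0 => if k < 0 then 0 else 1
  | α, k, (n + 1) =>
      if k < 0 then 0
      else ((k : ℝ) + α + 1) * lagEigen (α + 1) k n + (k : ℝ) * lagEigen (α + 1) (k - 1) n

lemma lagEigen_aux : ∀ (n : ℕ) (k : ℤ), lagEigen (-(n : ℝ)) k n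
    = if k < 0 then 0 else 2 ^ n * (ascPochhammer ℝ n).eval ((k : ℝ) - (n : ℝ) + 1)
  | 0, k => by simp [lagEigen]
  | (n + 1), k => by
    rw [lagEigen]
    by_cases hk : k < 0
    · simp [hk]
    · have h1 : -((n + 1 : ℕ) : ℝ) + 1 = -(n : ℝ) := by push_cast; ring
      rw [if_neg hk, if_neg hk, h1, lagEigen_aux n k, lagEigen_aux n (k - 1)]
      have hk0 : ¬ k < 0 := hk
      rw [if_neg hk0]
      have hsecond : (k : ℝ) * (if k - 1 < 0 then (0 : ℝ)
          else 2 ^ n * (ascPochhammer ℝ n).eval (((k - 1 : ℤ) : ℝ) - (n : ℝ) + 1))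
          = (k : ℝ) * (2 ^ n * (ascPochhammer ℝ n).eval (((k - 1 : ℤ) : ℝ) - (n : ℝ) + 1)) := by
        by_cases h : k - 1 < 0
        · have : k = 0 := by omega
          simp [this]
        · rw [if_neg h]
      rw [hsecond]
      have h2 : ((k - 1 : ℤ) : ℝ) - (n : ℝ) + 1 = (k : ℝ) - (n : ℝ) := by push_cast; ring
      have h3 : (k : ℝ) - ((n + 1 : ℕ) : ℝ) + 1 = (k : ℝ) - (n : ℝ) := by push_cast; ring
      rw [h2, h3]
      have f1 : (ascPochhammer ℝ (n + 1)).eval ((k : ℝ) - (n : ℝ))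
          = (ascPochhammer ℝ n).eval ((k : ℝ) - (n : ℝ)) * (((k : ℝ) - (n : ℝ)) + n) :=
        ascPochhammer_succ_eval n _
      have f2 : (ascPochhammer ℝ (n + 1)).eval ((k : ℝ) - (n : ℝ))
          = ((k : ℝ) - (n : ℝ)) * (ascPochhammer ℝ n).eval ((k : ℝ) - (n : ℝ) + 1) := by
        rw [ascPochhammer_succ_left, Polynomial.eval_mul, Polynomial.eval_X,
          Polynomial.eval_comp, Polynomial.eval_add, Polynomial.eval_X, Polynomial.eval_one]
      push_cast
      linear_combination (-(2 : ℝ) ^ n) * f1 + (-(2 : ℝ) ^ n) * f2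

theorem lagEigen_neg_n (k n : ℕ) :
    lagEigen (-(n : ℝ)) (k : ℤ) n
      = 2 ^ n * (ascPochhammer ℝ n).eval ((k : ℝ) - (n : ℝ) + 1) := by
  rw [lagEigen_aux n k, if_neg (by omega)]
  push_cast
  ring_nf
end

section
/- Define γ_{k,n}^α for integers α with α+n ∈ ℤ, by γ_{k,0}^α = Γ(k+α+1)/k! and γ_{k,n}^α = (1/2)·(γ_{k,n−1}^{α+1} + γ_{k−1,n−1}^{α+1}) for n ≥ 1 (with γ_{k,n}^α = 0 for k < 0). Then for all k, n ∈ ℕ₀, γ_{k,n}^{−n} = 2^{−n}·Σ_{ν=0}^{min(k,n)} C(n,ν), where C(n,ν) is the binomial coefficient. -/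
open Finset

/-- The normalization constants `γ_{k,n}^α`, with `γ_{k,0}^α = Γ(k+α+1)/k!`,
`γ_{k,n}^α = (γ_{k,n-1}^{α+1} + γ_{k-1,n-1}^{α+1})/2`, and `γ_{k,n}^α = 0` for `k < 0`. -/
noncomputable def lagGamma : ℤ → ℤ → ℕ → ℝ
  | α, k, 0 => if k < 0 then 0 else Real.Gamma ((k : ℝ) + (α : ℝ) + 1) / (k.toNat.factorial : ℝ)
  | α, k, (n + 1) =>
      if k < 0 then 0
      else (lagGamma (α + 1) k n + lagGamma (α + 1) (k - 1) n) / 2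

/-!
Along the diagonal `α = -n` the recursion lowers `n` and raises `α` together, so it stays on the
diagonal and ends at `α = 0`, where `γ_{k,0}^0 = Γ(k+1)/k! = 1` for `k ≥ 0` (and `0` for `k < 0`).
On the diagonal the recursion is Pascal's rule for the partial sums `∑_{ν ≤ k} C(n, ν)`, halved at
each step; the bound `ν ≤ min k n` is the same as `ν ≤ k` because `C(n, ν) = 0` for `ν > n`.
-/

lemma lagGamma_of_neg {α k : ℤ} (n : ℕ) (hk : k < 0) : lagGamma α k n = 0 := by
  cases n <;> simp [lagGamma, hk]

lemma lagGamma_succ_of_nonneg (α : ℤ) {k : ℤ} (n : ℕ) (hk : 0 ≤ k) :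
    lagGamma α k (n + 1) = (lagGamma (α + 1) k n + lagGamma (α + 1) (k - 1) n) / 2 := by
  rw [lagGamma, if_neg hk.not_gt]

lemma lagGamma_zero_natCast_zero (k : ℕ) : lagGamma 0 k 0 = 1 := by
  simp [lagGamma, Real.Gamma_nat_eq_factorial, Nat.factorial_ne_zero]

lemma sum_range_choose_succ_succ (n m : ℕ) :
    ∑ ν ∈ range (m + 2), (n + 1).choose ν
      = ∑ ν ∈ range (m + 2), n.choose ν + ∑ ν ∈ range (m + 1), n.choose ν := by
  simp only [sum_range_succ' _ (m + 1), Nat.choose_succ_succ, sum_add_distrib, Nat.choose_zero_right]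
  ring

lemma sum_range_min_choose (k n : ℕ) :
    ∑ ν ∈ range (min k n + 1), n.choose ν = ∑ ν ∈ range (k + 1), n.choose ν := by
  refine sum_subset (range_subset_range.2 (by omega)) fun ν hν hν' => ?_
  simp only [mem_range] at hν hν'
  exact Nat.choose_eq_zero_of_lt (by omega)

theorem lagGamma_neg_natCast_self (n k : ℕ) :
    lagGamma (-n) k n = (∑ ν ∈ range (k + 1), n.choose ν : ℕ) / 2 ^ n := by
  induction n generalizing k with
  | zero => simp [lagGamma_zero_natCast_zero, sum_range_succ']
  | succ n ih =>
    have hα : -((n + 1 : ℕ) : ℤ) + 1 = -n := by push_cast; ring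
    rw [lagGamma_succ_of_nonneg _ _ k.cast_nonneg, hα]
    cases k with
    | zero =>
      rw [ih, lagGamma_of_neg _ (by norm_num)]
      simp only [zero_add, range_one, sum_singleton, Nat.choose_zero_right, Nat.cast_one]
      ring
    | succ m =>
      rw [Nat.cast_succ, add_sub_cancel_right, ← Nat.cast_succ, ih, ih, sum_range_choose_succ_succ]
      push_cast
      ring

theorem lagGamma_neg_n (k n : ℕ) :
    lagGamma (-(n : ℤ)) (k : ℤ) n
      = (1 / 2 ^ n) * ∑ ν ∈ Finset.range (min k n + 1), (n.choose ν : ℝ) := by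
  rw [lagGamma_neg_natCast_self, one_div_mul_eq_div, ← Nat.cast_sum, sum_range_min_choose]
end
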